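/- Let G be a finite undirected simple graph, let u and v be distinct non-adjacent vertices with k_G(u) = k_G(v), and let G' = G + (u,v) be the graph obtained by inserting the edge (u,v). If w is any vertex whose coreness changes after the insertion, i.e., k_{G'}(w) ≠ k_G(w), then w is k-reachable from u or from v in the original graph G with k = k_G(u) = k_G(v): there is a path in G from u to w, or from v to w, all of whose vertices (including the endpoints) have G-coreness equal to k_G(u). -/

import Mathlib

/-!
Inserting an edge raises every coreness, and every degree by at most one. Let `m = k_G(w)`,
so `k_{G'}(w) ≥ m + 1`, and let `C ∋ w` have minimum degree `≥ m + 1` in `G'`; then every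
vertex of `C` has `G`-coreness at least `m`. If neither `u` nor `v` were `m`-reachable from
`w`, the vertices of `C` that are `m`-reachable from `w` would keep their degrees in `G`, and
every `C`-neighbour of such a vertex is either again `m`-reachable or lies in the
`(m + 1)`-core of `G`. So those vertices together with the `(m + 1)`-core would form a set of
minimum degree `≥ m + 1` in `G` containing `w`, contradicting `k_G(w) = m`.
-/

/-- Degree of `u` in the subgraph of `G` induced by the vertex set `C`. -/
noncomputable def degOn {V : Type*} (G : SimpleGraph V) (C : Set V) (u : V) : ℕ :=
  {v ∈ C | G.Adj u v}.ncard

/-- The coreness of a vertex `u`: the largest `k` such that `u` belongs to some set `C`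
all of whose vertices have degree at least `k` in the subgraph induced by `C`. -/
noncomputable def coreness {V : Type*} (G : SimpleGraph V) (u : V) : ℕ :=
  sSup {k : ℕ | ∃ C : Set V, u ∈ C ∧ ∀ w ∈ C, k ≤ degOn G C w}

open SimpleGraph

namespace SimpleGraph

variable {V : Type*}

/-- `k`-reachability is `G.ReachableIn {x | coreness G x = k}`. -/
def ReachableIn (G : SimpleGraph V) (S : Set V) (a b : V) : Prop :=
  ∃ p : G.Walk a b, ∀ x ∈ p.support, x ∈ S

namespace ReachableIn

variable {G : SimpleGraph V} {S : Set V} {a b c : V}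

lemma refl (ha : a ∈ S) : G.ReachableIn S a a :=
  ⟨.nil, by simpa using ha⟩

lemma mem_right (h : G.ReachableIn S a b) : b ∈ S :=
  h.choose_spec b h.choose.end_mem_support

lemma symm (h : G.ReachableIn S a b) : G.ReachableIn S b a := by
  obtain ⟨p, hp⟩ := h
  exact ⟨p.reverse, fun x hx => hp x (by simpa using hx)⟩

lemma concat (h : G.ReachableIn S a b) (hbc : G.Adj b c) (hc : c ∈ S) :
    G.ReachableIn S a c := by
  obtain ⟨p, hp⟩ := h
  refine ⟨p.concat hbc, fun x hx => ?_⟩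
  rw [Walk.support_concat, List.mem_append, List.mem_singleton] at hx
  exact hx.elim (hp x) (· ▸ hc)

lemma exists_isPath [DecidableEq V] (h : G.ReachableIn S a b) :
    ∃ p : G.Walk a b, p.IsPath ∧ ∀ x ∈ p.support, x ∈ S := by
  obtain ⟨p, hp⟩ := h
  exact ⟨p.bypass, p.bypass_isPath, fun x hx => hp x (p.support_bypass_subset_support hx)⟩

end ReachableIn

end SimpleGraph

section degOn

variable {V : Type*} {G H : SimpleGraph V} {C D : Set V} {x : V}

lemma degOn_mono_set [Finite V] (h : C ⊆ D) : degOn G C x ≤ degOn G D x :=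
  Set.ncard_le_ncard (fun _ hy => ⟨h hy.1, hy.2⟩)

lemma degOn_mono [Finite V] (h : G ≤ H) : degOn G C x ≤ degOn H C x :=
  Set.ncard_le_ncard (fun _ hy => ⟨hy.1, h hy.2⟩)

lemma degOn_sup_le : degOn (G ⊔ H) C x ≤ degOn G C x + degOn H C x := by
  have hunion :
      {y ∈ C | (G ⊔ H).Adj x y} = {y ∈ C | G.Adj x y} ∪ {y ∈ C | H.Adj x y} := by
    ext y
    simp only [sup_adj, Set.mem_ofPred_eq, Set.mem_union, and_or_left]
  exact (congrArg Set.ncard hunion).trans_le (Set.ncard_union_le _ _)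

lemma degOn_edge_le_one [Finite V] (u v : V) : degOn (edge u v) C x ≤ 1 :=
  (Set.ncard_le_one_iff).2 fun hy hz => by
    simp only [Set.mem_ofPred_eq, edge_adj] at hy hz
    grind

lemma degOn_edge_of_ne {u v : V} (hu : x ≠ u) (hv : x ≠ v) : degOn (edge u v) C x = 0 := by
  simp [degOn, edge_adj, hu, hv]

end degOn

section coreness

variable {V : Type*} [Finite V] (G : SimpleGraph V)

lemma bddAbove_coreness_set (u : V) :
    BddAbove {k : ℕ | ∃ C : Set V, u ∈ C ∧ ∀ w ∈ C, k ≤ degOn G C w} :=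
  ⟨Nat.card V, by rintro _ ⟨_, huC, h⟩; exact (h u huC).trans (Set.ncard_le_card _)⟩

lemma exists_set_coreness_le_degOn (u : V) :
    ∃ C : Set V, u ∈ C ∧ ∀ w ∈ C, coreness G u ≤ degOn G C w :=
  have hne : {k : ℕ | ∃ C : Set V, u ∈ C ∧ ∀ w ∈ C, k ≤ degOn G C w}.Nonempty :=
    ⟨0, Set.univ, trivial, fun _ _ => Nat.zero_le _⟩
  Nat.sSup_mem hne (bddAbove_coreness_set G u)

variable {G}

lemma le_coreness {u : V} {k : ℕ} {C : Set V} (hu : u ∈ C)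
    (h : ∀ x ∈ C, k ≤ degOn G C x) : k ≤ coreness G u :=
  le_csSup (bddAbove_coreness_set G u) ⟨C, hu, h⟩

lemma coreness_mono {H : SimpleGraph V} (h : G ≤ H) (u : V) : coreness G u ≤ coreness H u := by
  obtain ⟨C, huC, hC⟩ := exists_set_coreness_le_degOn G u
  exact le_coreness huC fun x hx => (hC x hx).trans (degOn_mono h)

lemma le_degOn_setOf_le_coreness {k : ℕ} {x : V} (hx : k ≤ coreness G x) :
    k ≤ degOn G {y | k ≤ coreness G y} x := by
  obtain ⟨C, hxC, hC⟩ := exists_set_coreness_le_degOn G x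
  have hCcore : C ⊆ {y | k ≤ coreness G y} := fun y hy =>
    le_coreness hy fun z hz => hx.trans (hC z hz)
  exact (hx.trans (hC x hxC)).trans (degOn_mono_set hCcore)

theorem succ_le_coreness_of_reachableIn_le_degOn {C : Set V} {w : V} {m : ℕ} (hwC : w ∈ C)
    (hC : ∀ x ∈ C, m ≤ coreness G x)
    (hdeg : ∀ x ∈ C, G.ReachableIn {y | coreness G y = m} w x → m + 1 ≤ degOn G C x) :
    m + 1 ≤ coreness G w := by
  set S := {y | coreness G y = m}
  set K := {y | m + 1 ≤ coreness G y}
  set T := {x ∈ C | G.ReachableIn S w x} ∪ K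
  have hwT : w ∈ T := by
    rcases (hC w hwC).eq_or_lt with hw | hw
    · exact Or.inl ⟨hwC, .refl hw.symm⟩
    · exact Or.inr hw
  refine le_coreness hwT ?_
  rintro x (⟨hxC, hwx⟩ | hxK)
  · have hCT : {y ∈ C | G.Adj x y} ⊆ {y ∈ T | G.Adj x y} := by
      rintro y ⟨hyC, hxy⟩
      refine ⟨?_, hxy⟩
      rcases (hC y hyC).eq_or_lt with hy | hy
      · exact Or.inl ⟨hyC, hwx.concat hxy hy.symm⟩
      · exact Or.inr hy
    exact (hdeg x hxC hwx).trans (Set.ncard_le_ncard hCT)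
  · exact (le_degOn_setOf_le_coreness hxK).trans (degOn_mono_set Set.subset_union_right)

end coreness

theorem candidate_of_insert_eq_general {V : Type*} [Fintype V] (G G' : SimpleGraph V)
    (u v : V) (huv : u ≠ v)
    (hG' : ∀ a b, G'.Adj a b ↔ G.Adj a b ∨ (a = u ∧ b = v) ∨ (a = v ∧ b = u))
    (hk : coreness G u = coreness G v)
    (w : V) (hw : coreness G' w ≠ coreness G w) :
    (∃ p : G.Walk u w, p.IsPath ∧ ∀ x ∈ p.support, coreness G x = coreness G u) ∨
    (∃ p : G.Walk v w, p.IsPath ∧ ∀ x ∈ p.support, coreness G x = coreness G u) := by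
  classical
  obtain rfl : G' = G ⊔ edge u v := by
    ext a b
    rw [hG', sup_adj, edge_adj]
    grind
  set m := coreness G w
  set S := {y | coreness G y = m}
  have hm : m + 1 ≤ coreness (G ⊔ edge u v) w := (coreness_mono le_sup_left w).lt_of_ne' hw
  obtain ⟨C, hwC, hC⟩ := exists_set_coreness_le_degOn (G ⊔ edge u v) w
  have hdegC : ∀ x ∈ C, m + 1 ≤ degOn G C x + degOn (edge u v) C x := fun x hx =>
    (hm.trans (hC x hx)).trans degOn_sup_le
  have hCm : ∀ x ∈ C, m ≤ coreness G x := fun x hx => le_coreness hx fun y hy => by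
    have := degOn_edge_le_one (C := C) (x := y) u v
    linarith [hdegC y hy]
  have hreach : G.ReachableIn S w u ∨ G.ReachableIn S w v := by
    by_contra! ⟨hu, hv⟩
    refine (succ_le_coreness_of_reachableIn_le_degOn hwC hCm fun x hx hwx => ?_).not_gt
      (lt_add_one m)
    have hxu : x ≠ u := by rintro rfl; exact hu hwx
    have hxv : x ≠ v := by rintro rfl; exact hv hwx
    simpa [degOn_edge_of_ne hxu hxv] using hdegC x hx
  rcases hreach with h | h
  · obtain ⟨p, hp, hpS⟩ := h.symm.exists_isPath
    exact Or.inl ⟨p, hp, fun x hx => (hpS x hx).trans h.mem_right.symm⟩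
  · obtain ⟨p, hp, hpS⟩ := h.symm.exists_isPath
    exact Or.inr ⟨p, hp, fun x hx => (hpS x hx).trans (h.mem_right.symm.trans hk.symm)⟩

/-- If the edge `(u,v)` with `k_G(u) = k_G(v)` is inserted, then every vertex `w` whose
coreness changes is `k`-reachable from `u` or from `v` in the original graph `G` with
`k = k_G(u) = k_G(v)`: there is a path in `G` from `u` to `w`, or from `v` to `w`, all
of whose vertices have coreness `k_G(u)`. -/
theorem candidate_of_insert_eq {V : Type*} [Fintype V] (G G' : SimpleGraph V)
    (u v : V) (huv : u ≠ v) (hna : ¬ G.Adj u v)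
    (hG' : ∀ a b, G'.Adj a b ↔ G.Adj a b ∨ (a = u ∧ b = v) ∨ (a = v ∧ b = u))
    (hk : coreness G u = coreness G v)
    (w : V) (hw : coreness G' w ≠ coreness G w) :
    (∃ p : G.Walk u w, p.IsPath ∧ ∀ x ∈ p.support, coreness G x = coreness G u) ∨
    (∃ p : G.Walk v w, p.IsPath ∧ ∀ x ∈ p.support, coreness G x = coreness G u) :=
  candidate_of_insert_eq_general G G' u v huv hG' hk w hw
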